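/- arXiv:1203.4581 — 3 statements merged into one kernel-verified Lean document; each statement's English description precedes it below -/
import Mathlib

section
/- Let L be a non-contractible compact metric ANR, X a normal space, F ⊆ X a closed subset, and α an ordinal. If L-Ind F = 0 and L-Ind E ≤ α for every closed subset E ⊆ X disjoint from F, then L-Ind X ≤ α. -/
open Set Topology Cardinal

noncomputable section

attribute [local instance] Classical.propDecidable

/-- Values of dimension functions: `⊥ : WithBot Ordinal.{0}` encodes `−1`,
ordinals are the usual values, and `⊤` encodes `∞`. -/
abbrev Dim : Type 1 := WithTop (WithBot Ordinal.{0})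

/-- An ordinal viewed as a dimension value. -/
def Dim.ofOrdinal (a : Ordinal.{0}) : Dim := ((a : WithBot Ordinal.{0}) : Dim)

/-- The dimension value `−1`. -/
def Dim.minusOne : Dim := ((⊥ : WithBot Ordinal.{0}) : Dim)

/-- An integer `m ≥ −1` viewed as a dimension value. -/
def Dim.ofInt (m : ℤ) : Dim := if 0 ≤ m then Dim.ofOrdinal m.toNat else Dim.minusOne

/-- `A` is a `K`-tuple for the simplicial complex `K` on the vertex set `Fin m`:
whenever the members indexed by a nonempty `I` have a common point, `I` spans a
simplex of `K`. -/
def IsKTuple {m : ℕ} (K : Finset (Fin m) → Prop) {X : Type} (A : Fin m → Set X) : Prop :=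
  ∀ I : Finset (Fin m), I.Nonempty → (⋂ i ∈ I, A i).Nonempty → K I

/-- `K` is an abstract (finite) simplicial complex with vertex set `Fin m`:
it is closed under passing to nonempty subsets, and contains every vertex. -/
def IsComplex {m : ℕ} (K : Finset (Fin m) → Prop) : Prop :=
  (∀ s t : Finset (Fin m), s ⊆ t → s.Nonempty → K t → K s) ∧ ∀ i, K {i}

/-- The boundary complex `∂Δ^k` of the `k`-simplex: all proper subsets of the
`k+1` vertices span simplices. -/
def bComplex (k : ℕ) : Finset (Fin (k + 1)) → Prop := fun s => s ≠ Finset.univ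

/-- `U` is an (open) `K`-neighbourhood of the tuple `F`. -/
def KNbhd {m : ℕ} (K : Finset (Fin m) → Prop) {X : Type} [TopologicalSpace X]
    (F U : Fin m → Set X) : Prop :=
  (∀ i, IsOpen (U i)) ∧ IsKTuple K U ∧ ∀ i, F i ⊆ U i

/-- Auxiliary form of `K-Ind X ≤ α`, defined by transfinite recursion on `α`:
every closed `K`-tuple has a `K`-neighbourhood whose corresponding `K`-partition
is either empty (dimension `−1`) or has `K-Ind < α`. -/
def KIndLeAux {m : ℕ} (K : Finset (Fin m) → Prop) :
    Ordinal.{0} → ∀ X : Type, TopologicalSpace X → Prop :=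
  (wellFounded_lt (α := Ordinal.{0})).fix fun α rec X tX =>
    letI := tX
    ∀ F : Fin m → Set X, (∀ i, IsClosed (F i)) → IsKTuple K F →
      ∃ U : Fin m → Set X, (∀ i, IsOpen (U i)) ∧ IsKTuple K U ∧ (∀ i, F i ⊆ U i) ∧
        ((⋃ i, U i)ᶜ = (∅ : Set X) ∨
          ∃ β : Set.Iio α, rec β.1 β.2 (↥((⋃ i, U i)ᶜ)) inferInstance)

/-- `K-Ind X ≤ α` (for an ordinal `α ≥ 0`). -/
def KIndLE {m : ℕ} (K : Finset (Fin m) → Prop) (X : Type) [tX : TopologicalSpace X]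
    (α : Ordinal.{0}) : Prop :=
  KIndLeAux K α X tX

/-- Fedorchuk's inductive dimension `K-Ind` modulo a simplicial complex `K`;
`−1` for the empty space, the least `α` with `K-Ind X ≤ α` otherwise, `∞` if none. -/
def KInd {m : ℕ} (K : Finset (Fin m) → Prop) (X : Type) [TopologicalSpace X] : Dim :=
  if IsEmpty X then Dim.minusOne
  else if ∃ α, KIndLE K X α then Dim.ofOrdinal (sInf {α | KIndLE K X α}) else ⊤

/-- The set of `K`-obstruction points of an open `K`-tuple `U`: points covered
by no `K`-neighbourhood of `U`. -/
def KObs {m : ℕ} (K : Finset (Fin m) → Prop) {X : Type} [TopologicalSpace X]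
    (U : Fin m → Set X) : Set X :=
  {x | ¬ ∃ V : Fin m → Set X, KNbhd K U V ∧ x ∈ ⋃ i, V i}

/-- `X` is strongly `α`-dimensional: `K-Ind X` is a positive ordinal `α` and some
closed `K`-tuple admits no `K`-neighbourhood `U` without obstruction points whose
corresponding `K`-partition has `K-Ind < α`. -/
def KStrongly {m : ℕ} (K : Finset (Fin m) → Prop) (X : Type) [TopologicalSpace X] : Prop :=
  (∃ α : Ordinal.{0}, 0 < α ∧ KInd K X = Dim.ofOrdinal α) ∧
  ∃ F : Fin m → Set X, (∀ i, IsClosed (F i)) ∧ IsKTuple K F ∧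
    ∀ U : Fin m → Set X, KNbhd K F U →
      KInd K (↥((⋃ i, U i)ᶜ)) < KInd K X → KObs K U ≠ ∅

/-- The dimensional strength degree `K-str X ∈ {0,1}`. -/
def KStr {m : ℕ} (K : Finset (Fin m) → Prop) (X : Type) [TopologicalSpace X] : ℕ :=
  if KStrongly K X then 1 else 0

/-- `K-dim X ≤ n`: any `n+1` closed `K`-tuples admit `K`-partitions with empty
intersection. -/
def KDimLE {m : ℕ} (K : Finset (Fin m) → Prop) (X : Type) [TopologicalSpace X] (n : ℕ) : Prop :=
  ∀ F : Fin (n + 1) → Fin m → Set X,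
    (∀ j i, IsClosed (F j i)) → (∀ j, IsKTuple K (F j)) →
    ∃ U : Fin (n + 1) → Fin m → Set X, (∀ j, KNbhd K (F j) (U j)) ∧
      (⋂ j, (⋃ i, U j i)ᶜ) = (∅ : Set X)

/-- Fedorchuk's dimension `K-dim` modulo a simplicial complex `K`. -/
def KDim {m : ℕ} (K : Finset (Fin m) → Prop) (X : Type) [TopologicalSpace X] : Dim :=
  if IsEmpty X then Dim.minusOne
  else if ∃ n, KDimLE K X n then Dim.ofOrdinal ((sInf {n | KDimLE K X n} : ℕ) : Ordinal.{0}) else ⊤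

/-- `dim X ≤ n` for the Lebesgue covering dimension: every finite open cover has
an open shrinking of order at most `n+1`. -/
def CovDimLE (X : Type) [TopologicalSpace X] (n : ℕ) : Prop :=
  ∀ (ι : Type), Finite ι → ∀ U : ι → Set X, (∀ i, IsOpen (U i)) → (⋃ i, U i) = Set.univ →
    ∃ V : ι → Set X, (∀ i, IsOpen (V i)) ∧ (∀ i, V i ⊆ U i) ∧ (⋃ i, V i) = Set.univ ∧
      ∀ x : X, ({i | x ∈ V i}).ncard ≤ n + 1

/-- The Lebesgue covering dimension. -/
def covDim (X : Type) [TopologicalSpace X] : Dim :=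
  if IsEmpty X then Dim.minusOne
  else if ∃ n, CovDimLE X n then Dim.ofOrdinal ((sInf {n | CovDimLE X n} : ℕ) : Ordinal.{0}) else ⊤

/-- `Ind X ≤ n` for the large inductive dimension, by recursion on `n`. -/
def IndLE : ℕ → ∀ X : Type, TopologicalSpace X → Prop
  | 0, X, tX =>
    letI := tX
    ∀ F U : Set X, IsClosed F → IsOpen U → F ⊆ U →
      ∃ V : Set X, IsOpen V ∧ F ⊆ V ∧ V ⊆ U ∧ frontier V = ∅
  | n + 1, X, tX =>
    letI := tX
    ∀ F U : Set X, IsClosed F → IsOpen U → F ⊆ U →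
      ∃ V : Set X, IsOpen V ∧ F ⊆ V ∧ V ⊆ U ∧ IndLE n (↥(frontier V)) inferInstance

/-- The large inductive dimension `Ind`. -/
def IndDim (X : Type) [tX : TopologicalSpace X] : Dim :=
  if IsEmpty X then Dim.minusOne
  else if ∃ n, IndLE n X tX then Dim.ofOrdinal ((sInf {n | IndLE n X tX} : ℕ) : Ordinal.{0}) else ⊤

/-- The relation generating the topological join `A ∗ B`: the copy of `B` is
collapsed at parameter `0`, the copy of `A` at parameter `1`. -/
def JoinRel (A B : Type) : (A × B × unitInterval) → (A × B × unitInterval) → Prop :=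
  fun p q => (p.2.2 = 0 ∧ q.2.2 = 0 ∧ p.1 = q.1) ∨ (p.2.2 = 1 ∧ q.2.2 = 1 ∧ p.2.1 = q.2.1)

/-- The topological join `A ∗ B`. -/
abbrev Join (A B : Type) [TopologicalSpace A] [TopologicalSpace B] : Type :=
  Quot (JoinRel A B)

/-- Auxiliary construction of the join of `n+1` copies of `L`, bundled with its
topology. -/
def JoinPowAux (L : Type) (tL : TopologicalSpace L) : ℕ → (T : Type) × TopologicalSpace T
  | 0 => ⟨L, tL⟩
  | n + 1 =>
    let p := JoinPowAux L tL n
    letI := tL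
    letI := p.2
    ⟨Join L p.1, inferInstance⟩

/-- The join `L ∗ ⋯ ∗ L` of `n+1` copies of `L`. -/
def JoinPow (L : Type) [tL : TopologicalSpace L] (n : ℕ) : Type :=
  (JoinPowAux L tL n).1

instance joinPowTopologicalSpace (L : Type) [tL : TopologicalSpace L] (n : ℕ) :
    TopologicalSpace (JoinPow L n) :=
  (JoinPowAux L tL n).2

/-- `L-dim X ≤ n`: every continuous map from a closed subset of `X` to the join
of `n+1` copies of `L` extends continuously over `X`. -/
def LDimLE (L : Type) [TopologicalSpace L] (X : Type) [TopologicalSpace X] (n : ℕ) : Prop :=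
  ∀ F : Set X, IsClosed F → ∀ f : C(F, JoinPow L n),
    ∃ g : C(X, JoinPow L n), ∀ x : F, g x = f x

/-- Fedorchuk's dimension `L-dim` modulo an ANR `L`. -/
def LDim (L : Type) [TopologicalSpace L] (X : Type) [TopologicalSpace X] : Dim :=
  if IsEmpty X then Dim.minusOne
  else if ∃ n, LDimLE L X n then Dim.ofOrdinal ((sInf {n | LDimLE L X n} : ℕ) : Ordinal.{0}) else ⊤

/-- Auxiliary form of `L-Ind X ≤ α`, by transfinite recursion on `α`: every map
to `L` from a closed subset of `X` has an `L`-partition which is either empty or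
has `L-Ind < α`. -/
def LIndLeAux (L : Type) [TopologicalSpace L] :
    Ordinal.{0} → ∀ X : Type, TopologicalSpace X → Prop :=
  (wellFounded_lt (α := Ordinal.{0})).fix fun α rec X tX =>
    letI := tX
    ∀ F : Set X, IsClosed F → ∀ f : C(F, L),
      ∃ U : Set X, IsOpen U ∧ ∃ hFU : F ⊆ U,
        (∃ g : C(U, L), ∀ (x : X) (hx : x ∈ F), g ⟨x, hFU hx⟩ = f ⟨x, hx⟩) ∧
        (Uᶜ = (∅ : Set X) ∨ ∃ β : Set.Iio α, rec β.1 β.2 (↥(Uᶜ)) inferInstance)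

/-- `L-Ind X ≤ α` (for an ordinal `α ≥ 0`). -/
def LIndLE (L : Type) [TopologicalSpace L] (X : Type) [tX : TopologicalSpace X]
    (α : Ordinal.{0}) : Prop :=
  LIndLeAux L α X tX

/-- Fedorchuk's inductive dimension `L-Ind` modulo an ANR `L`. -/
def LInd (L : Type) [TopologicalSpace L] (X : Type) [TopologicalSpace X] : Dim :=
  if IsEmpty X then Dim.minusOne
  else if ∃ α, LIndLE L X α then Dim.ofOrdinal (sInf {α | LIndLE L X α}) else ⊤

/-- `L` is an absolute neighbourhood retract (for metric spaces): `L` is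
metrizable and whenever a closed subset `A` of a metric space is homeomorphic to
`L` via `e`, the map `e` extends continuously over a neighbourhood of `A`. -/
def IsANR (L : Type) [TopologicalSpace L] : Prop :=
  TopologicalSpace.MetrizableSpace L ∧
  ∀ (M : Type) [MetricSpace M], ∀ A : Set M, IsClosed A → ∀ e : A ≃ₜ L,
    ∃ U : Set M, IsOpen U ∧ ∃ hAU : A ⊆ U, ∃ r : C(U, L),
      ∀ (a : M) (ha : a ∈ A), r ⟨a, hAU ha⟩ = e ⟨a, ha⟩

/-- `L-Ind_{b+} X`: the least dimension value `d` such that some open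
neighbourhood of `b` has closure of `L-Ind` at most `d`. -/
def LIndPlus (L : Type) [TopologicalSpace L] {X : Type} [TopologicalSpace X] (b : X) : Dim :=
  sInf {d : Dim | ∃ U : Set X, IsOpen U ∧ b ∈ U ∧ LInd L (↥(closure U)) ≤ d}

/-- The set `K(X) = {b ∈ X : L-Ind_{b+} X = L-Ind X}`. -/
def LKset (L : Type) [TopologicalSpace L] (X : Type) [TopologicalSpace X] : Set X :=
  {b | LIndPlus L b = LInd L X}

/-- The weight of a topological space: the least cardinality of a basis. -/
def tWeight (X : Type) [TopologicalSpace X] : Cardinal :=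
  sInf {c | ∃ B : Set (Set X), TopologicalSpace.IsTopologicalBasis B ∧ #B = c}

/-- The family `𝒮_X` of all subsets of `X` that are finite or homeomorphic to the
one-point compactification `A_{ℵ₀}` of a countably infinite discrete space. -/
def SFam (X : Type) [TopologicalSpace X] : Set (Set X) :=
  {S | S.Finite ∨ Nonempty (↥S ≃ₜ OnePoint ℕ)}

/-- The relation generating the quotient `N` in the `Z(X,Y)` construction:
each set `{μ} × {x} × Y` is collapsed to a point. -/
def ZRel (ι X Y : Type) : (OnePoint ι × X × Y) → (OnePoint ι × X × Y) → Prop :=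
  fun p q => p.1 = OnePoint.infty ∧ q.1 = OnePoint.infty ∧ p.2.1 = q.2.1

/-- The quotient space `N` of `A_𝔪 × X × Y`. -/
abbrev ZQuot (ι X Y : Type) [TopologicalSpace ι] [TopologicalSpace X] [TopologicalSpace Y] :
    Type :=
  Quot (ZRel ι X Y)

/-- The subset `Z(X,Y) = ⋃_{α ∈ A_𝔪} H(α)` of `N`:  `H(μ) = π₁({μ} × X × Y)` and
`H(α) = π₁({α} × φ(α) × Y)` for `α ≠ μ`. -/
def ZSet (ι X Y : Type) [TopologicalSpace ι] [TopologicalSpace X] [TopologicalSpace Y]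
    (φ : ι → Set X) : Set (ZQuot ι X Y) :=
  {z | ∃ p : OnePoint ι × X × Y, Quot.mk (ZRel ι X Y) p = z ∧
        (p.1 = OnePoint.infty ∨ ∃ i : ι, p.1 = (i : OnePoint ι) ∧ p.2.1 ∈ φ i)}

/-- The space `Z(X,Y)` (for the data `ι`, `φ`), with the subspace topology. -/
abbrev ZSpace (ι X Y : Type) [TopologicalSpace ι] [TopologicalSpace X] [TopologicalSpace Y]
    (φ : ι → Set X) : Type :=
  ↥(ZSet ι X Y φ)

/-- The subset `H(μ)` of `Z(X,Y)`. -/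
def ZHmu (ι X Y : Type) [TopologicalSpace ι] [TopologicalSpace X] [TopologicalSpace Y]
    (φ : ι → Set X) : Set (ZSpace ι X Y φ) :=
  {z | ∃ (x : X) (y : Y), (z : ZQuot ι X Y) = Quot.mk (ZRel ι X Y) (OnePoint.infty, x, y)}

/-- The projection `π_X : N → X`, `π₁(α,x,y) ↦ x`. -/
def ZQuotProjX {ι X Y : Type} [TopologicalSpace ι] [TopologicalSpace X] [TopologicalSpace Y] :
    ZQuot ι X Y → X :=
  Quot.lift (fun p => p.2.1) (fun _ _ h => h.2.2)

/-- The projection `π_X : Z(X,Y) → X`. -/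
def ZProjX {ι X Y : Type} [TopologicalSpace ι] [TopologicalSpace X] [TopologicalSpace Y]
    (φ : ι → Set X) : ZSpace ι X Y φ → X :=
  fun z => ZQuotProjX (z : ZQuot ι X Y)

/-- The cardinality requirements on the index set `ι` (of cardinality `𝔪`) in the
`Z(X,Y)` construction: `𝔪 ≥ max {ℵ₀, (wX)⁺, (wY)⁺, card 𝒮_X}`. -/
def ZCardOK (X Y ι : Type) [TopologicalSpace X] [TopologicalSpace Y] : Prop :=
  ℵ₀ ≤ #ι ∧ tWeight X < #ι ∧ tWeight Y < #ι ∧ #(SFam X) ≤ #ι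

/-- The requirements on `φ : A_𝔪 \ {μ} → 𝒮_X`: it takes values in `𝒮_X` and every
fibre has cardinality `𝔪`. -/
def ZPhiOK {X ι : Type} [TopologicalSpace X] (φ : ι → Set X) : Prop :=
  (∀ i, φ i ∈ SFam X) ∧ ∀ S ∈ SFam X, #(↥(φ ⁻¹' {S})) = #ι

/-! Extend `f : C → L` over `C ∪ F` using `L-Ind F = 0`, and then, `L` being an ANR,
over an open `W ⊇ C ∪ F`. By normality pick an open `V ⊇ C ∪ F` with `closure V ⊆ W`.
The closed set `X \ V` misses `F`, so `L-Ind (X \ V) ≤ α` gives an `L`-partition there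
for the extension restricted to `closure V \ V`; together with `V` it is an `L`-partition
for `f` in `X`. -/

theorem ContinuousOn.of_isClosed_cover {α β : Type*} [TopologicalSpace α] [TopologicalSpace β]
    {f : α → β} {s t u : Set α} (hs : IsClosed s) (ht : IsClosed t) (hu : u ⊆ s ∪ t)
    (hfs : ContinuousOn f (s ∩ u)) (hft : ContinuousOn f (t ∩ u)) : ContinuousOn f u := by
  have hu' : u ⊆ s ∩ u ∪ t ∩ u := by
    rw [← union_inter_distrib_right]
    exact subset_inter hu le_rfl
  intro x hx
  refine ContinuousWithinAt.mono (.union ?_ ?_) hu'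
  · by_cases hxs : x ∈ s
    · exact hfs x ⟨hxs, hx⟩
    · exact continuousWithinAt_of_notMem_closure fun h =>
        hxs (hs.closure_subset (closure_mono inter_subset_left h))
  · by_cases hxt : x ∈ t
    · exact hft x ⟨hxt, hx⟩
    · exact continuousWithinAt_of_notMem_closure fun h =>
        hxt (ht.closure_subset (closure_mono inter_subset_left h))

theorem ContinuousMap.exists_continuousOn_domRestrict_eq {α β : Type*} [TopologicalSpace α]
    [TopologicalSpace β] [Nonempty β] {s : Set α} (f : C(s, β)) :
    ∃ g : α → β, ContinuousOn g s ∧ s.domRestrict g = f := by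
  have hg : s.domRestrict (Function.extend Subtype.val f fun _ => Classical.arbitrary β) = f :=
    funext fun x => Subtype.val_injective.extend_apply _ _ x
  exact ⟨_, continuousOn_iff_continuous_domRestrict.2 (by rw [hg]; exact f.continuous), hg⟩

def LIndLT (L : Type) [TopologicalSpace L] (X : Type) [TopologicalSpace X] (α : Ordinal.{0}) :
    Prop :=
  IsEmpty X ∨ ∃ β < α, LIndLE L X β

section LInd

variable {L : Type} [TopologicalSpace L] {X : Type} [TopologicalSpace X] {α β : Ordinal.{0}}

theorem lIndLE_iff :
    LIndLE L X α ↔ ∀ C : Set X, IsClosed C → ∀ f : C(C, L),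
      ∃ U : Set X, IsOpen U ∧ ∃ hCU : C ⊆ U,
        (∃ g : C(U, L), ∀ (x : X) (hx : x ∈ C), g ⟨x, hCU hx⟩ = f ⟨x, hx⟩) ∧
        LIndLT L ↥Uᶜ α := by
  unfold LIndLT LIndLE LIndLeAux
  rw [WellFounded.fix_eq]
  simp only [Set.isEmpty_coe_sort, Subtype.exists, Set.mem_Iio, exists_prop]

theorem LIndLT.mono (h : LIndLT L X β) (hβα : β ≤ α) : LIndLT L X α :=
  h.imp_right fun ⟨γ, hγ, hγX⟩ => ⟨γ, hγ.trans_le hβα, hγX⟩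

theorem LIndLE.mono (h : LIndLE L X β) (hβα : β ≤ α) : LIndLE L X α := by
  rw [lIndLE_iff] at h ⊢
  intro C hC f
  obtain ⟨U, hU, hCU, hg, hP⟩ := h C hC f
  exact ⟨U, hU, hCU, hg, hP.mono hβα⟩

theorem lIndLT_zero_iff : LIndLT L X 0 ↔ IsEmpty X := by
  simp [LIndLT]

theorem lIndLE_of_isEmpty [IsEmpty X] (α : Ordinal.{0}) : LIndLE L X α :=
  lIndLE_iff.2 fun C _ _ => ⟨univ, isOpen_univ, subset_univ C,
    ⟨⟨fun x => isEmptyElim x, continuous_of_discreteTopology⟩, fun x => isEmptyElim x⟩,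
    Or.inl inferInstance⟩

theorem lInd_le_ofOrdinal_iff : LInd L X ≤ Dim.ofOrdinal α ↔ LIndLE L X α := by
  rw [LInd]
  split_ifs with hX hex
  · simpa [Dim.minusOne, Dim.ofOrdinal] using lIndLE_of_isEmpty α
  · simp only [Dim.ofOrdinal, WithTop.coe_le_coe, WithBot.coe_le_coe]
    exact ⟨fun h => LIndLE.mono (csInf_mem hex) h, fun h => csInf_le' h⟩
  · simpa [Dim.ofOrdinal] using fun h => hex ⟨α, h⟩

theorem nonempty_of_lInd_eq_ofOrdinal (h : LInd L X = Dim.ofOrdinal α) : Nonempty X := by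
  by_contra hX
  simp [LInd, not_nonempty_iff.1 hX, Dim.minusOne, Dim.ofOrdinal] at h

theorem LIndLE.of_isClosedEmbedding {Y : Type} [TopologicalSpace Y] {φ : Y → X}
    (hφ : IsClosedEmbedding φ) (h : LIndLE L X α) : LIndLE L Y α := by
  induction α using WellFoundedLT.induction generalizing X Y with
  | _ α IH =>
    rw [lIndLE_iff] at h ⊢
    intro C hC f
    let e := hφ.isEmbedding.homeomorphImage C
    obtain ⟨U, hU, hCU, ⟨g, hg⟩, hP⟩ := h (φ '' C) (hφ.isClosedMap C hC) (f.comp e.symm)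
    refine ⟨φ ⁻¹' U, hU.preimage hφ.continuous, fun y hy => hCU (mem_image_of_mem φ hy),
      ⟨g.comp ⟨U.restrictPreimage φ, hφ.continuous.restrictPreimage⟩, fun y hy => ?_⟩, ?_⟩
    · have he : e.symm ⟨φ y, mem_image_of_mem φ hy⟩ = ⟨y, hy⟩ := e.symm_apply_eq.2 rfl
      exact (hg (φ y) _).trans (congrArg f he)
    · exact hP.imp (fun h => @Function.isEmpty _ _ h (Uᶜ.restrictPreimage φ))
        fun ⟨β, hβ, hβU⟩ => ⟨β, hβ, IH β hβ (hφ.restrictPreimage Uᶜ) hβU⟩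

theorem LIndLT.of_isClosedEmbedding {Y : Type} [TopologicalSpace Y] {φ : Y → X}
    (hφ : IsClosedEmbedding φ) (h : LIndLT L X α) : LIndLT L Y α :=
  h.imp (fun h => @Function.isEmpty _ _ h φ)
    fun ⟨β, hβ, hβX⟩ => ⟨β, hβ, hβX.of_isClosedEmbedding hφ⟩

end LInd

section ContinuousOn

variable {L : Type} [TopologicalSpace L] [Nonempty L] {X : Type} [TopologicalSpace X]
  {α : Ordinal.{0}}

theorem lIndLE_iff_continuousOn :
    LIndLE L X α ↔ ∀ C : Set X, IsClosed C → ∀ f : X → L, ContinuousOn f C →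
      ∃ U : Set X, IsOpen U ∧ C ⊆ U ∧
        ∃ g : X → L, ContinuousOn g U ∧ EqOn g f C ∧ LIndLT L ↥Uᶜ α := by
  rw [lIndLE_iff]
  constructor
  · intro h C hC f hf
    obtain ⟨U, hU, hCU, ⟨g, hg⟩, hP⟩ := h C hC ⟨_, hf.domRestrict⟩
    obtain ⟨g', hg'U, hg'g⟩ := g.exists_continuousOn_domRestrict_eq
    exact ⟨U, hU, hCU, g', hg'U,
      fun x hx => (congrFun hg'g ⟨x, hCU hx⟩).trans (hg x hx), hP⟩
  · intro h C hC f
    obtain ⟨f', hf', hf'f⟩ := f.exists_continuousOn_domRestrict_eq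
    obtain ⟨U, hU, hCU, g, hg, hgf, hP⟩ := h C hC f' hf'
    exact ⟨U, hU, hCU,
      ⟨⟨_, hg.domRestrict⟩, fun x hx => (hgf hx).trans (congrFun hf'f ⟨x, hx⟩)⟩, hP⟩

theorem LIndLE.exists_continuous_extension_of_zero (h : LIndLE L X 0) {C : Set X}
    (hC : IsClosed C) {f : X → L} (hf : ContinuousOn f C) :
    ∃ g : X → L, Continuous g ∧ EqOn g f C := by
  obtain ⟨U, -, -, g, hg, hgf, hP⟩ := lIndLE_iff_continuousOn.1 h C hC f hf
  obtain rfl : U = Set.univ := by simpa [lIndLT_zero_iff] using hP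
  exact ⟨g, continuousOn_univ.1 hg, hgf⟩

theorem LIndLE.exists_continuousOn_union_of_zero {F C : Set X} (hF0 : LIndLE L F 0)
    (hF : IsClosed F) (hC : IsClosed C) {f : X → L} (hf : ContinuousOn f C) :
    ∃ g : X → L, ContinuousOn g (C ∪ F) ∧ EqOn g f C := by
  obtain ⟨gF, hgF, hgFf⟩ := hF0.exists_continuous_extension_of_zero
    (hC.preimage continuous_subtype_val) (hf.comp continuous_subtype_val.continuousOn
      (mapsTo_preimage _ _))
  obtain ⟨g, hgF_eq, hgf⟩ : ∃ g : X → L, F.domRestrict g = gF ∧ EqOn g f C :=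
    ⟨fun x => if hx : x ∈ F then gF ⟨x, hx⟩ else f x, funext fun x => dif_pos x.2,
      fun x hx => by
        by_cases hxF : x ∈ F
        · simpa [hxF] using hgFf (show (⟨x, hxF⟩ : F) ∈ _ from hx)
        · simp [hxF]⟩
  refine ⟨g, (hf.congr hgf).union_of_isClosed ?_ hC hF, hgf⟩
  exact continuousOn_iff_continuous_domRestrict.2 (hgF_eq ▸ hgF)

theorem exists_continuousOn_extension_of_lIndLE_compl {V : Set X} (hV : IsOpen V) {g : X → L}
    (hg : ContinuousOn g (closure V)) (hE : LIndLE L ↥Vᶜ α) :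
    ∃ U : Set X, IsOpen U ∧ V ⊆ U ∧
      ∃ G : X → L, ContinuousOn G U ∧ EqOn G g V ∧ LIndLT L ↥Uᶜ α := by
  obtain ⟨V₁, hV₁, -, g₁, hg₁, hg₁g, hP⟩ := lIndLE_iff_continuousOn.1 hE _
    (isClosed_closure.preimage continuous_subtype_val) (g ∘ Subtype.val)
    (hg.comp continuous_subtype_val.continuousOn (mapsTo_preimage _ _))
  obtain ⟨O, hO, rfl⟩ := isOpen_induced_iff.1 hV₁
  let G : X → L := fun x => if hx : x ∈ V then g x else g₁ ⟨x, hx⟩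
  have hGg : EqOn G g (closure V) := fun x hx => by
    by_cases hxV : x ∈ V
    · simp [G, hxV]
    · simpa [G, hxV] using hg₁g (show (⟨x, hxV⟩ : ↥Vᶜ) ∈ _ from hx)
  have hGO : ContinuousOn G (Vᶜ ∩ (V ∪ O)) := by
    have h : (Vᶜ ∩ (V ∪ O)).domRestrict G =
        g₁ ∘ fun x : ↥(Vᶜ ∩ (V ∪ O)) => ⟨x, x.2.1⟩ :=
      funext fun x => dif_neg x.2.1
    rw [continuousOn_iff_continuous_domRestrict, h]
    exact hg₁.comp_continuous (continuous_subtype_val.subtype_mk _)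
      fun x => x.2.2.resolve_left x.2.1
  have hUc : IsClosedEmbedding fun x : ↥(V ∪ O)ᶜ => (⟨⟨x, fun h => x.2 (Or.inl h)⟩,
      fun h => x.2 (Or.inr h)⟩ : ↥(Subtype.val ⁻¹' O : Set ↥Vᶜ)ᶜ) :=
    .of_comp (IsEmbedding.subtypeVal.comp IsEmbedding.subtypeVal)
      (hV.union hO).isClosed_compl.isClosedEmbedding_subtypeVal
  refine ⟨V ∪ O, hV.union hO, subset_union_left, G, ?_, hGg.mono subset_closure,
    hP.of_isClosedEmbedding hUc⟩
  exact .of_isClosed_cover isClosed_closure hV.isClosed_compl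
    (fun x _ => (em (x ∈ V)).imp (fun h => subset_closure h) id)
    ((hg.congr hGg).mono inter_subset_left) hGO

end ContinuousOn

theorem LIndLE.nonempty_of_zero {L X : Type} [TopologicalSpace L] [TopologicalSpace X]
    [Nonempty X] (h : LIndLE L X 0) : Nonempty L := by
  obtain ⟨U, -, -, ⟨g, -⟩, hP⟩ := lIndLE_iff.1 h ∅ isClosed_empty
    ⟨fun x => isEmptyElim x, continuous_of_discreteTopology⟩
  obtain rfl : U = Set.univ := by simpa [lIndLT_zero_iff] using hP
  exact ⟨g ⟨Classical.arbitrary X, mem_univ _⟩⟩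

-- `L` embeds as a closed subset of `ℕ → ℝ`, where Tietze extends `f`; the ANR property then
-- retracts a neighbourhood of the image back onto `L`.
theorem IsANR.exists_continuousOn_extension {L : Type} [MetricSpace L] [CompactSpace L]
    [Nonempty L] (hL : IsANR L) {X : Type} [TopologicalSpace X] [NormalSpace X] {A : Set X}
    (hA : IsClosed A) {f : X → L} (hf : ContinuousOn f A) :
    ∃ U : Set X, IsOpen U ∧ A ⊆ U ∧ ∃ g : X → L, ContinuousOn g U ∧ EqOn g f A := by
  obtain ⟨ψ, hψ⟩ := TopologicalSpace.exists_embedding_l_infty L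
  let ι : L → ℕ → ℝ := fun l => ψ l
  have hι : IsClosedEmbedding ι := (BoundedContinuousFunction.continuous_coe.comp
    hψ.continuous).isClosedEmbedding (DFunLike.coe_injective.comp hψ.injective)
  let : MetricSpace (ℕ → ℝ) := TopologicalSpace.metrizableSpaceMetric _
  obtain ⟨V, hV, hιV, r, hr⟩ :=
    hL.2 (ℕ → ℝ) (range ι) hι.isClosed_range hι.isEmbedding.toHomeomorph.symm
  obtain ⟨r', hr', hr'r⟩ := r.exists_continuousOn_domRestrict_eq
  obtain ⟨G, hG⟩ := ContinuousMap.exists_restrict_eq hA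
    ⟨ι ∘ A.domRestrict f, hι.continuous.comp hf.domRestrict⟩
  have hGA : ∀ x ∈ A, G x = ι (f x) := fun x hx => ContinuousMap.congr_fun hG ⟨x, hx⟩
  refine ⟨G ⁻¹' V, hV.preimage G.continuous, fun x hx => ?_, r' ∘ G,
    hr'.comp G.continuous.continuousOn (mapsTo_preimage _ _), fun x hx => ?_⟩
  · rw [mem_preimage, hGA x hx]
    exact hιV (mem_range_self _)
  calc r' (G x) = r ⟨ι (f x), hιV (mem_range_self _)⟩ := by
        rw [hGA x hx]; exact congrFun hr'r ⟨_, _⟩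
    _ = hι.isEmbedding.toHomeomorph.symm ⟨ι (f x), mem_range_self _⟩ := hr _ _
    _ = f x := hι.isEmbedding.toHomeomorph_symm_apply (f x)

theorem lIndLE_of_lIndLE_zero_of_forall_disjoint {L : Type} [MetricSpace L] [CompactSpace L]
    [Nonempty L] (hL : IsANR L) {X : Type} [TopologicalSpace X] [NormalSpace X] {F : Set X}
    (hF : IsClosed F) (hF0 : LIndLE L F 0) {α : Ordinal.{0}}
    (hE : ∀ E : Set X, IsClosed E → Disjoint E F → LIndLE L E α) : LIndLE L X α := by
  refine lIndLE_iff_continuousOn.2 fun C hC f hf => ?_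
  obtain ⟨g, hg, hgf⟩ := hF0.exists_continuousOn_union_of_zero hF hC hf
  obtain ⟨W, hW, hCFW, g', hg', hg'g⟩ := hL.exists_continuousOn_extension (hC.union hF) hg
  obtain ⟨V, hV, hCFV, hVW⟩ := normal_exists_closure_subset (hC.union hF) hW hCFW
  have hVF : Disjoint Vᶜ F := disjoint_compl_left_iff_subset.2 (subset_union_right.trans hCFV)
  obtain ⟨U, hU, hVU, G, hG, hGg', hP⟩ :=
    exists_continuousOn_extension_of_lIndLE_compl hV (hg'.mono hVW) (hE _ hV.isClosed_compl hVF)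
  have hCV : C ⊆ V := subset_union_left.trans hCFV
  exact ⟨U, hU, hCV.trans hVU, G, hG,
    fun x hx => (hGg' (hCV hx)).trans ((hg'g (Or.inl hx)).trans (hgf hx)), hP⟩

theorem statement3_general (L : Type) [MetricSpace L] [CompactSpace L]
    (hANR : IsANR L)
    (X : Type) [TopologicalSpace X] [NormalSpace X]
    (F : Set X) (hF : IsClosed F) (α : Ordinal.{0})
    (h0 : LInd L (↥F) = Dim.ofOrdinal 0)
    (hE : ∀ E : Set X, IsClosed E → Disjoint E F → LInd L (↥E) ≤ Dim.ofOrdinal α) :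
    LInd L X ≤ Dim.ofOrdinal α := by
  have hF0 : LIndLE L F 0 := lInd_le_ofOrdinal_iff.1 h0.le
  have : Nonempty F := nonempty_of_lInd_eq_ofOrdinal h0
  have : Nonempty L := hF0.nonempty_of_zero
  exact lInd_le_ofOrdinal_iff.2 <| lIndLE_of_lIndLE_zero_of_forall_disjoint hANR hF hF0
    fun E hEc hEF => lInd_le_ofOrdinal_iff.1 (hE E hEc hEF)

theorem statement3 (L : Type) [MetricSpace L] [CompactSpace L]
    (hANR : IsANR L) (hL : ¬ContractibleSpace L)
    (X : Type) [TopologicalSpace X] [T1Space X] [NormalSpace X]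
    (F : Set X) (hF : IsClosed F) (α : Ordinal.{0})
    (h0 : LInd L (↥F) = Dim.ofOrdinal 0)
    (hE : ∀ E : Set X, IsClosed E → Disjoint E F → LInd L (↥E) ≤ Dim.ofOrdinal α) :
    LInd L X ≤ Dim.ofOrdinal α :=
  statement3_general L hANR X F hF α h0 hE
end
end

section
/- Let k ≥ 1 and m ≥ −1 be integers, and X a normal space. If every closed ∂Δ^k-tuple of X has a ∂Δ^k-partition P such that dim P ≤ m and the complement X \ P is a normal space, then dim X ≤ k + m, where dim denotes the Lebesgue covering dimension. -/
open Set Topology Cardinal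

noncomputable section

attribute [local instance] Classical.propDecidable

-- ===== auxiliary lemmas for statement4 =====
section Statement4Aux

lemma Dim.ofOrdinal_le_ofOrdinal {a b : Ordinal.{0}} :
    Dim.ofOrdinal a ≤ Dim.ofOrdinal b ↔ a ≤ b := by
  simp [Dim.ofOrdinal]

lemma Dim.minusOne_le_ofOrdinal (a : Ordinal.{0}) : Dim.minusOne ≤ Dim.ofOrdinal a := by
  simp [Dim.minusOne, Dim.ofOrdinal]

lemma covDimLE_mono {X : Type} [TopologicalSpace X] {n n' : ℕ} (hnn' : n ≤ n')
    (h : CovDimLE X n) : CovDimLE X n' := by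
  intro ι hι U hUo hUc
  obtain ⟨V, h1, h2, h3, h4⟩ := h ι hι U hUo hUc
  exact ⟨V, h1, h2, h3, fun x => (h4 x).trans (by omega)⟩

lemma covDim_le_of_covDimLE {X : Type} [TopologicalSpace X] (n : ℕ) (h : CovDimLE X n) :
    covDim X ≤ Dim.ofOrdinal n := by
  rw [covDim]
  split_ifs with h1 h2
  · exact Dim.minusOne_le_ofOrdinal _
  · rw [Dim.ofOrdinal_le_ofOrdinal, Nat.cast_le]
    exact Nat.sInf_le h
  · exact absurd ⟨n, h⟩ h2

lemma not_covDim_le_minusOne {Y : Type} [TopologicalSpace Y] [Nonempty Y] :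
    ¬ covDim Y ≤ Dim.minusOne := by
  rw [covDim, if_neg (not_isEmpty_of_nonempty Y)]
  split_ifs with h2
  · simp [Dim.ofOrdinal, Dim.minusOne]
  · simp [Dim.minusOne]

lemma covDimLE_of_covDim_le {Y : Type} [TopologicalSpace Y] [Nonempty Y] {n : ℕ}
    (h : covDim Y ≤ Dim.ofOrdinal n) : CovDimLE Y n := by
  rw [covDim, if_neg (not_isEmpty_of_nonempty Y)] at h
  split_ifs at h with h2
  · rw [Dim.ofOrdinal_le_ofOrdinal, Nat.cast_le] at h
    exact covDimLE_mono h (Nat.sInf_mem h2)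
  · simp [Dim.ofOrdinal] at h

lemma closed_shrinking {X : Type} [TopologicalSpace X] [NormalSpace X] {ι : Type} [Finite ι]
    (U : ι → Set X) (hUo : ∀ i, IsOpen (U i)) (hUc : ⋃ i, U i = Set.univ) :
    ∃ D : ι → Set X, (∀ i, IsClosed (D i)) ∧ (∀ i, D i ⊆ U i) ∧ ⋃ i, D i = Set.univ := by
  obtain ⟨v, hv1, hv2, hv3⟩ := exists_iUnion_eq_closure_subset hUo (fun x => Set.toFinite _) hUc
  refine ⟨fun i => closure (v i), fun i => isClosed_closure, hv3, ?_⟩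
  apply univ_subset_iff.1
  rw [← hv1]
  exact iUnion_mono fun i => subset_closure

lemma swelling {X : Type} [TopologicalSpace X] [NormalSpace X] {ι : Type} [Finite ι]
    (D A : ι → Set X) (hD : ∀ i, IsClosed (D i)) (hA : ∀ i, IsOpen (A i))
    (hDA : ∀ i, D i ⊆ A i) (hempty : ⋂ i, D i = ∅) :
    ∃ W : ι → Set X, (∀ i, IsOpen (W i)) ∧ (∀ i, D i ⊆ W i) ∧ (∀ i, W i ⊆ A i) ∧
      ⋂ i, W i = ∅ := by
  haveI := Fintype.ofFinite ι
  classical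
  suffices h : ∀ s : Finset ι, ∃ W : ι → Set X,
      (∀ i ∈ s, IsOpen (W i) ∧ D i ⊆ W i ∧ W i ⊆ A i) ∧ (∀ i ∉ s, W i = D i) ∧
      ⋂ i, (if i ∈ s then closure (W i) else W i) = ∅ by
    obtain ⟨W, h1, h2, h3⟩ := h Finset.univ
    refine ⟨W, fun i => (h1 i (Finset.mem_univ i)).1, fun i => (h1 i (Finset.mem_univ i)).2.1,
      fun i => (h1 i (Finset.mem_univ i)).2.2, ?_⟩
    rw [eq_empty_iff_forall_notMem] at h3 ⊢
    intro x hx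
    refine h3 x ?_
    simp only [Finset.mem_univ, if_true, mem_iInter]
    exact fun i => subset_closure (mem_iInter.1 hx i)
  intro s
  induction s using Finset.induction_on with
  | empty =>
    refine ⟨D, by simp, fun i _ => rfl, ?_⟩
    simpa using hempty
  | @insert a s ha ih =>
    obtain ⟨W, h1, h2, h3⟩ := ih
    set T : Set X := ⋂ i, (if i ∈ s then closure (W i) else if i = a then Set.univ else W i) with hT
    have hTclosed : IsClosed T := isClosed_iInter fun i => by
      split_ifs with h' h''
      · exact isClosed_closure
      · exact isClosed_univ
      · rw [h2 i h']; exact hD i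
    have hdisj : D a ⊆ Tᶜ := by
      intro x hxa hxT
      have hmem : x ∈ ⋂ i, (if i ∈ s then closure (W i) else W i) := by
        rw [mem_iInter]
        intro i
        have hi := mem_iInter.1 hxT i
        by_cases h' : i ∈ s
        · simpa [h'] using hi
        · by_cases h'' : i = a
          · subst h''
            rw [if_neg h', h2 i h']
            exact hxa
          · simpa [h', h''] using hi
      rw [h3] at hmem
      exact hmem
    obtain ⟨V, hVo, hDV, hVT⟩ :=
      normal_exists_closure_subset (hD a) hTclosed.isOpen_compl hdisj
    refine ⟨fun i => if i = a then V ∩ A a else W i, ?_, ?_, ?_⟩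
    · intro i hi
      dsimp only
      by_cases h' : i = a
      · subst h'
        rw [if_pos rfl]
        exact ⟨hVo.inter (hA i), subset_inter hDV (hDA i), inter_subset_right⟩
      · rw [if_neg h']
        exact h1 i ((Finset.mem_insert.1 hi).resolve_left h')
    · intro i hi
      dsimp only
      rw [Finset.mem_insert, not_or] at hi
      rw [if_neg hi.1]
      exact h2 i hi.2
    · rw [eq_empty_iff_forall_notMem]
      intro x hx
      have hxa : x ∈ closure (V ∩ A a) := by
        have := mem_iInter.1 hx a
        simpa [Finset.mem_insert_self] using this
      have hxV : x ∈ closure V := closure_mono inter_subset_left hxa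
      have hxT : x ∈ T := by
        rw [hT, mem_iInter]
        intro i
        by_cases h' : i ∈ s
        · rw [if_pos h']
          have := mem_iInter.1 hx i
          have hia : i ≠ a := fun he => ha (he ▸ h')
          simpa [Finset.mem_insert, h', hia, if_neg hia] using this
        · by_cases h'' : i = a
          · rw [if_neg h', if_pos h'']
            exact mem_univ x
          · rw [if_neg h', if_neg h'']
            have hthis := mem_iInter.1 hx i
            have hthis2 : x ∈ (if i ∈ insert a s then closure ((if i = a then V ∩ A a else W i)) else (if i = a then V ∩ A a else W i)) := hthis
            rw [if_neg (by simp [h', h'']), if_neg h''] at hthis2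
            exact hthis2
      exact (hVT hxV) hxT

lemma covDimLE_of_H {X : Type} [TopologicalSpace X] (n : ℕ)
    (H : ∀ A : Fin (n + 2) → Set X, (∀ t, IsOpen (A t)) → (⋃ t, A t) = Set.univ →
      ∃ B : Fin (n + 2) → Set X, (∀ t, IsOpen (B t)) ∧ (∀ t, B t ⊆ A t) ∧
        (⋃ t, B t) = Set.univ ∧ (⋂ t, B t) = ∅) :
    CovDimLE X n := by
  intro ι hι U hUo hUc
  haveI := Fintype.ofFinite ι
  classical
  suffices h : ∀ 𝒯 : Finset (Finset ι), (∀ S ∈ 𝒯, S.card = n + 2) →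
      ∃ V : ι → Set X, (∀ i, IsOpen (V i)) ∧ (∀ i, V i ⊆ U i) ∧ (⋃ i, V i) = Set.univ ∧
        ∀ S ∈ 𝒯, (⋂ i ∈ S, V i) = ∅ by
    obtain ⟨V, h1, h2, h3, h4⟩ := h (Finset.univ.filter fun S => S.card = n + 2)
      fun S hS => (Finset.mem_filter.1 hS).2
    refine ⟨V, h1, h2, h3, fun x => ?_⟩
    by_contra hx
    push_neg at hx
    have hfin : {i | x ∈ V i}.Finite := Set.toFinite _
    have hcard : n + 2 ≤ hfin.toFinset.card := by
      rw [← Set.ncard_eq_toFinset_card _ hfin]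
      omega
    obtain ⟨T, hTsub, hTcard⟩ := Finset.exists_subset_card_eq hcard
    have h5 := h4 T (Finset.mem_filter.2 ⟨Finset.mem_univ _, hTcard⟩)
    rw [eq_empty_iff_forall_notMem] at h5
    refine h5 x (mem_iInter₂.2 fun i hi => ?_)
    have := hTsub hi
    rw [Set.Finite.mem_toFinset] at this
    exact this
  intro 𝒯
  induction 𝒯 using Finset.induction_on with
  | empty => exact fun _ => ⟨U, hUo, fun i => subset_rfl, hUc, by simp⟩
  | @insert S 𝒯 hS ih =>
    intro hcards
    obtain ⟨V, h1, h2, h3, h4⟩ := ih fun S' hS' => hcards S' (Finset.mem_insert_of_mem hS')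
    have hScard : S.card = n + 2 := hcards S (Finset.mem_insert_self S 𝒯)
    set e : Fin (n+2) ≃ {y // y ∈ S} := (S.equivFin.trans (finCongr hScard)).symm with he
    set A : Fin (n + 2) → Set X := fun t =>
      if t = 0 then V (e 0) ∪ ⋃ i ∈ (Sᶜ : Finset ι), V i else V (e t) with hA
    have hVA : ∀ t, V ((e t : ι)) ⊆ A t := by
      intro t
      rw [hA]
      dsimp only
      split_ifs with h0
      · subst h0; exact subset_union_left
      · exact subset_rfl
    have hAo : ∀ t, IsOpen (A t) := by
      intro t
      rw [hA]; dsimp only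
      split_ifs
      · exact (h1 _).union (isOpen_biUnion fun i _ => h1 i)
      · exact h1 _
    have hAc : ⋃ t, A t = Set.univ := by
      rw [eq_univ_iff_forall]
      intro x
      have hx : x ∈ ⋃ i, V i := h3 ▸ mem_univ x
      obtain ⟨i, hi⟩ := mem_iUnion.1 hx
      by_cases hiS : i ∈ S
      · refine mem_iUnion.2 ⟨e.symm ⟨i, hiS⟩, ?_⟩
        refine hVA _ ?_
        rw [Equiv.apply_symm_apply]
        exact hi
      · refine mem_iUnion.2 ⟨0, ?_⟩
        rw [hA]
        dsimp only
        rw [if_pos rfl]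
        exact Or.inr (mem_biUnion (Finset.mem_compl.2 hiS) hi)
    obtain ⟨B, hB1, hB2, hB3, hB4⟩ := H A hAo hAc
    refine ⟨fun i => if h : i ∈ S then V i ∩ B (e.symm ⟨i, h⟩) else V i, ?_, ?_, ?_, ?_⟩
    · intro i
      dsimp only
      split_ifs with h'
      · exact (h1 i).inter (hB1 _)
      · exact h1 i
    · intro i
      dsimp only
      split_ifs with h'
      · exact inter_subset_left.trans (h2 i)
      · exact h2 i
    · rw [eq_univ_iff_forall]
      intro x
      have hx : x ∈ ⋃ t, B t := hB3 ▸ mem_univ x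
      obtain ⟨t, ht⟩ := mem_iUnion.1 hx
      have hxA : x ∈ A t := hB2 t ht
      rw [hA] at hxA
      dsimp only at hxA
      by_cases ht0 : t = 0
      · rw [if_pos ht0] at hxA
        rcases hxA with hxA | hxA
        · refine mem_iUnion.2 ⟨(e 0 : ι), ?_⟩
          have hmem : ((e 0 : ι)) ∈ S := (e 0).2
          rw [dif_pos hmem]
          refine ⟨hxA, ?_⟩
          have heq : (⟨(e 0 : ι), hmem⟩ : {y // y ∈ S}) = e 0 := Subtype.ext rfl
          rw [heq, Equiv.symm_apply_apply]
          exact ht0 ▸ ht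
        · obtain ⟨i, hic, hxi⟩ := mem_iUnion₂.1 hxA
          refine mem_iUnion.2 ⟨i, ?_⟩
          rw [dif_neg (Finset.mem_compl.1 hic)]
          exact hxi
      · rw [if_neg ht0] at hxA
        refine mem_iUnion.2 ⟨(e t : ι), ?_⟩
        have hmem : ((e t : ι)) ∈ S := (e t).2
        rw [dif_pos hmem]
        refine ⟨hxA, ?_⟩
        have heq : (⟨(e t : ι), hmem⟩ : {y // y ∈ S}) = e t := Subtype.ext rfl
        rw [heq, Equiv.symm_apply_apply]
        exact ht
    · intro S' hS'
      rcases Finset.mem_insert.1 hS' with hS' | hS'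
      · rw [hS', eq_empty_iff_forall_notMem]
        intro x hx
        have hxB : x ∈ ⋂ t, B t := by
          rw [mem_iInter]
          intro t
          have hmem : ((e t : ι)) ∈ S := (e t).2
          have := mem_iInter₂.1 hx _ hmem
          dsimp only at this
          rw [dif_pos hmem] at this
          have heq : (⟨(e t : ι), hmem⟩ : {y // y ∈ S}) = e t := Subtype.ext rfl
          rw [heq, Equiv.symm_apply_apply] at this
          exact this.2
        rw [hB4] at hxB
        exact hxB
      · have hsub : (⋂ i ∈ S', (if h : i ∈ S then V i ∩ B (e.symm ⟨i, h⟩) else V i)) ⊆ ⋂ i ∈ S', V i := by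
          refine iInter₂_mono fun i _ => ?_
          split_ifs with h'
          · exact inter_subset_left
          · exact subset_rfl
        rw [← subset_empty_iff]
        exact hsub.trans (le_of_eq (h4 S' hS'))

end Statement4Aux

-- STATEMENT 4
theorem statement4 (k : ℕ) (hk : 1 ≤ k) (m : ℤ) (hm : -1 ≤ m)
    (X : Type) [TopologicalSpace X] [T1Space X] [NormalSpace X]
    (h : ∀ F : Fin (k + 1) → Set X, (∀ i, IsClosed (F i)) → IsKTuple (bComplex k) F →
      ∃ U : Fin (k + 1) → Set X, KNbhd (bComplex k) F U ∧
        covDim (↥((⋃ i, U i)ᶜ)) ≤ Dim.ofInt m ∧ NormalSpace (↥(⋃ i, U i))) :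
    covDim X ≤ Dim.ofInt (k + m) := by
  set M : ℕ := (m + 1).toNat with hM
  set n : ℕ := k - 1 + M with hn
  have Hn : ∀ A : Fin (n + 2) → Set X, (∀ t, IsOpen (A t)) → (⋃ t, A t) = Set.univ →
      ∃ B : Fin (n + 2) → Set X, (∀ t, IsOpen (B t)) ∧ (∀ t, B t ⊆ A t) ∧
        (⋃ t, B t) = Set.univ ∧ (⋂ t, B t) = ∅ := by
    intro A hAo hAc
    set C : Fin (k + 1) → Set X := fun i =>
      if h : (i : ℕ) < k then (A ⟨(i : ℕ), by omega⟩)ᶜ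
      else (⋃ j : Fin (M + 1), A ⟨k + (j : ℕ), by have := j.isLt; omega⟩)ᶜ with hC
    have hCc : ∀ i, IsClosed (C i) := by
      intro i
      rw [hC]; dsimp only
      by_cases h' : (i : ℕ) < k
      · rw [dif_pos h']
        exact (hAo _).isClosed_compl
      · rw [dif_neg h']
        exact isClosed_compl_iff.2 (isOpen_iUnion fun j => hAo _)
    have hCK : IsKTuple (bComplex k) C := by
      intro I hIne hInonempty
      rw [bComplex]
      intro hIuniv
      obtain ⟨x, hx⟩ := hInonempty
      rw [hIuniv] at hx
      have hxC : ∀ i : Fin (k + 1), x ∈ C i := fun i =>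
        mem_iInter₂.1 hx i (Finset.mem_univ i)
      have hxc : x ∈ ⋃ t, A t := hAc ▸ mem_univ x
      obtain ⟨l, hl⟩ := mem_iUnion.1 hxc
      by_cases hlk : (l : ℕ) < k
      · have hc := hxC ⟨(l : ℕ), by omega⟩
        rw [hC] at hc; dsimp only at hc
        rw [dif_pos (by simpa using hlk)] at hc
        apply hc
        have : (⟨(l : ℕ), by omega⟩ : Fin (n + 2)) = l := Fin.ext rfl
        rw [this]
        exact hl
      · have hc := hxC ⟨k, by omega⟩
        rw [hC] at hc; dsimp only at hc
        rw [dif_neg (by simp)] at hc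
        apply hc
        refine mem_iUnion.2 ⟨⟨(l : ℕ) - k, by have := l.isLt; omega⟩, ?_⟩
        have : (⟨k + ((l : ℕ) - k), by have := l.isLt; omega⟩ : Fin (n + 2)) = l :=
          by apply Fin.ext; show k + ((l : ℕ) - k) = (l : ℕ); omega
        rw [this]
        exact hl
    obtain ⟨U, hKN, hdim, _⟩ := h C hCc hCK
    obtain ⟨hUo, hUK, hCU⟩ := hKN
    have hUempty : ⋂ i, U i = ∅ := by
      by_contra hne
      rw [← ne_eq, ← nonempty_iff_ne_empty] at hne
      have hb := hUK Finset.univ Finset.univ_nonempty (by simpa using hne)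
      simp [bComplex] at hb
    set P : Set X := (⋃ i, U i)ᶜ with hP
    have hkk1 : k < k + 1 := by omega
    set Q : Set X := (U ⟨k, hkk1⟩)ᶜ with hQ
    have hPQ : P ⊆ Q := compl_subset_compl.2 (subset_iUnion U _)
    have hCkval : C ⟨k, hkk1⟩ =
        (⋃ j : Fin (M + 1), A ⟨k + (j : ℕ), by have := j.isLt; omega⟩)ᶜ := by
      rw [hC]; dsimp only
      rw [dif_neg (by simp)]
    have hQA : ∀ x ∈ Q, x ∈ ⋃ j : Fin (M + 1), A ⟨k + (j : ℕ), by have := j.isLt; omega⟩ := by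
      intro x hxQ
      by_contra hxA
      have : x ∈ C ⟨k, hkk1⟩ := by rw [hCkval]; exact hxA
      exact hxQ (hCU ⟨k, hkk1⟩ this)
    have hO : ∃ O : Fin (M + 1) → Set X, (∀ j, IsOpen (O j)) ∧
        (∀ j, O j ⊆ A ⟨k + (j : ℕ), by have := j.isLt; omega⟩) ∧
        (P ⊆ ⋃ j, O j) ∧ (P ∩ ⋂ j, O j) = ∅ := by
      rcases isEmpty_or_nonempty (↥P) with hPe | hPne
      · have hPemp : P = ∅ := Set.isEmpty_coe_sort.1 hPe
        refine ⟨fun _ => ∅, fun _ => isOpen_empty, fun _ => empty_subset _, ?_, ?_⟩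
        · rw [hPemp]; exact empty_subset _
        · rw [hPemp, empty_inter]
      · haveI := hPne
        have hm0 : 0 ≤ m := by
          by_contra hm'
          have hmeq : m = -1 := by omega
          rw [hmeq] at hdim
          have : Dim.ofInt (-1) = Dim.minusOne := by rw [Dim.ofInt, if_neg (by omega)]
          rw [this] at hdim
          exact not_covDim_le_minusOne hdim
        have hdim' : CovDimLE (↥P) (M - 1) := by
          have heq : Dim.ofInt m = Dim.ofOrdinal ((M - 1 : ℕ) : Ordinal) := by
            rw [Dim.ofInt, if_pos hm0]
            have : m.toNat = M - 1 := by omega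
            rw [this]
          rw [heq] at hdim
          exact covDimLE_of_covDim_le hdim
        obtain ⟨V', hV1, hV2, hV3, hV4⟩ := hdim' (Fin (M + 1)) inferInstance
          (fun j => (Subtype.val ⁻¹' (A ⟨k + (j : ℕ), by have := j.isLt; omega⟩) : Set ↥P))
          (fun j => (hAo _).preimage continuous_subtype_val)
          (by
            rw [eq_univ_iff_forall]
            intro p
            obtain ⟨j, hj⟩ := mem_iUnion.1 (hQA p.1 (hPQ p.2))
            exact mem_iUnion.2 ⟨j, hj⟩)
        choose O0 hO0o hO0e using fun j => isOpen_induced_iff.1 (hV1 j)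
        refine ⟨fun j => O0 j ∩ A ⟨k + (j : ℕ), by have := j.isLt; omega⟩,
          fun j => (hO0o j).inter (hAo _), fun j => inter_subset_right, ?_, ?_⟩
        · intro x hx
          have hp : (⟨x, hx⟩ : ↥P) ∈ ⋃ j, V' j := hV3 ▸ mem_univ _
          obtain ⟨j, hj⟩ := mem_iUnion.1 hp
          refine mem_iUnion.2 ⟨j, ?_⟩
          constructor
          · have : (⟨x, hx⟩ : ↥P) ∈ Subtype.val ⁻¹' O0 j := by rw [hO0e j]; exact hj
            exact this
          · exact hV2 j hj
        · rw [eq_empty_iff_forall_notMem]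
          rintro x ⟨hxP, hxO⟩
          have hall : ∀ j, (⟨x, hxP⟩ : ↥P) ∈ V' j := by
            intro j
            rw [← hO0e j]
            exact (mem_iInter.1 hxO j).1
          have huniv : {j : Fin (M + 1) | (⟨x, hxP⟩ : ↥P) ∈ V' j} = Set.univ :=
            eq_univ_iff_forall.2 hall
          have hcard := hV4 ⟨x, hxP⟩
          rw [huniv, ncard_univ, Nat.card_eq_fintype_card, Fintype.card_fin] at hcard
          omega
    obtain ⟨O, hOo, hOA, hPO, hPOe⟩ := hO
    have hPc : IsOpen Pᶜ := by rw [hP, compl_compl]; exact isOpen_iUnion hUo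
    set G : Fin (M + 1) → Set X := fun j =>
      O j ∪ (A ⟨k + (j : ℕ), by have := j.isLt; omega⟩ ∩ Pᶜ) with hG
    have hGo : ∀ j, IsOpen (G j) := fun j => (hOo j).union ((hAo _).inter hPc)
    set c : Option (Fin (M + 1)) → Set X := fun o => Option.elim o (U ⟨k, hkk1⟩) G with hc
    have hco : ∀ o, IsOpen (c o) := by
      rintro (_ | j)
      · exact hUo _
      · exact hGo j
    have hcc : ⋃ o, c o = Set.univ := by
      rw [eq_univ_iff_forall]
      intro x
      by_cases hxU : x ∈ U ⟨k, hkk1⟩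
      · exact mem_iUnion.2 ⟨none, hxU⟩
      · by_cases hxP : x ∈ P
        · obtain ⟨j, hj⟩ := mem_iUnion.1 (hPO hxP)
          exact mem_iUnion.2 ⟨some j, Or.inl hj⟩
        · obtain ⟨j, hj⟩ := mem_iUnion.1 (hQA x hxU)
          exact mem_iUnion.2 ⟨some j, Or.inr ⟨hj, hxP⟩⟩
    obtain ⟨D, hDc, hDsub, hDcov⟩ := closed_shrinking c hco hcc
    set Ecl : Fin (n + 2) → Set X := fun l =>
      if hlt : (l : ℕ) < k then (U ⟨(l : ℕ), by omega⟩)ᶜ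
      else D (some ⟨(l : ℕ) - k, by have := l.isLt; omega⟩) ∩ Q with hE
    have hEvalD : ∀ (j : Fin (M + 1)) (pf : k + (j : ℕ) < n + 2),
        Ecl ⟨k + (j : ℕ), pf⟩ = D (some j) ∩ Q := by
      intro j pf
      rw [hE]; dsimp only
      rw [dif_neg (show ¬ (k + (j : ℕ) < k) by omega)]
      have hval : ((⟨k + (j : ℕ), pf⟩ : Fin (n + 2)) : ℕ) - k = (j : ℕ) := by
        show k + (j : ℕ) - k = (j : ℕ)
        omega
      simp only [hval, Fin.eta]
    have hEc : ∀ l, IsClosed (Ecl l) := by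
      intro l
      rw [hE]; dsimp only
      by_cases h' : (l : ℕ) < k
      · rw [dif_pos h']
        exact (hUo _).isClosed_compl
      · rw [dif_neg h']
        exact (hDc _).inter (hUo _).isClosed_compl
    have hEA : ∀ l, Ecl l ⊆ A l := by
      intro l
      rw [hE]; dsimp only
      by_cases h' : (l : ℕ) < k
      case pos =>
        rw [dif_pos h']
        have hsub : (U ⟨(l : ℕ), by omega⟩)ᶜ ⊆ (C ⟨(l : ℕ), by omega⟩)ᶜ :=
          compl_subset_compl.2 (hCU _)
        refine hsub.trans ?_
        have hCl : C ⟨(l : ℕ), by omega⟩ = (A ⟨(l : ℕ), by omega⟩)ᶜ := by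
          rw [hC]; dsimp only
          rw [dif_pos (by simpa using h')]
        rw [hCl, compl_compl]
      case neg =>
        rw [dif_neg h']
        set j0 : Fin (M + 1) := ⟨(l : ℕ) - k, by have := l.isLt; omega⟩ with hj0d
        have h1 : D (some j0) ∩ Q ⊆ G j0 := inter_subset_left.trans (hDsub (some j0))
        have h2 : G j0 ⊆ A ⟨k + (j0 : ℕ), by have := j0.isLt; omega⟩ := by
          rw [hG]; dsimp only
          exact union_subset (hOA j0) inter_subset_left
        have hval : (j0 : ℕ) = (l : ℕ) - k := rfl
        have h3 : A ⟨k + (j0 : ℕ), by have := j0.isLt; omega⟩ = A l := by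
          have hfeq : (⟨k + (j0 : ℕ), by have := j0.isLt; omega⟩ : Fin (n + 2)) = l := by
            apply Fin.ext
            show k + (j0 : ℕ) = (l : ℕ)
            omega
          exact congrArg A hfeq
        exact (h1.trans h2).trans (le_of_eq h3)
    have hEcov : ⋃ l, Ecl l = Set.univ := by
      rw [eq_univ_iff_forall]
      intro x
      by_cases hex : ∀ i : Fin (k + 1), (i : ℕ) < k → x ∈ U i
      · have hxQ : x ∉ U ⟨k, hkk1⟩ := by
          intro hxk
          have : x ∈ ⋂ i, U i := by
            rw [mem_iInter]
            intro i
            by_cases hik : (i : ℕ) < k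
            · exact hex i hik
            · have : i = ⟨k, hkk1⟩ := by apply Fin.ext; show (i : ℕ) = k; have := i.isLt; omega
              rw [this]; exact hxk
          rw [hUempty] at this
          exact this
        have hxD : x ∈ ⋃ o, D o := hDcov ▸ mem_univ x
        obtain ⟨o, ho⟩ := mem_iUnion.1 hxD
        match o with
        | none => exact absurd (hDsub none ho) hxQ
        | some j =>
          refine mem_iUnion.2 ⟨⟨k + (j : ℕ), by have := j.isLt; omega⟩, ?_⟩
          rw [hEvalD j]
          exact ⟨ho, hxQ⟩
      · push_neg at hex
        obtain ⟨i, hik, hxi⟩ := hex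
        refine mem_iUnion.2 ⟨⟨(i : ℕ), by omega⟩, ?_⟩
        rw [hE]; dsimp only
        rw [dif_pos (by simpa using hik)]
        exact hxi
    have hEempty : ⋂ l, Ecl l = ∅ := by
      rw [eq_empty_iff_forall_notMem]
      intro x hx
      have hxk := mem_iInter.1 hx ⟨k, by omega⟩
      rw [hE] at hxk; dsimp only at hxk
      rw [dif_neg (by simp)] at hxk
      have hxQ : x ∈ Q := hxk.2
      have hxP : x ∈ P := by
        rw [hP, mem_compl_iff]
        intro hxu
        obtain ⟨i, hi⟩ := mem_iUnion.1 hxu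
        by_cases hik : (i : ℕ) < k
        · have := mem_iInter.1 hx ⟨(i : ℕ), by omega⟩
          rw [hE] at this; dsimp only at this
          rw [dif_pos (by simpa using hik)] at this
          exact this hi
        · have : i = ⟨k, hkk1⟩ := by apply Fin.ext; show (i : ℕ) = k; have := i.isLt; omega
          rw [this] at hi
          exact hxQ hi
      have hxO : ∀ j : Fin (M + 1), x ∈ O j := by
        intro j
        have := mem_iInter.1 hx ⟨k + (j : ℕ), by have := j.isLt; omega⟩
        rw [hEvalD j] at this
        have hxG : x ∈ G j := hDsub (some j) this.1
        rw [hG] at hxG; dsimp only at hxG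
        rcases hxG with hxG | hxG
        · exact hxG
        · exact absurd hxP hxG.2
      have : x ∈ P ∩ ⋂ j, O j := ⟨hxP, mem_iInter.2 hxO⟩
      rw [hPOe] at this
      exact this
    obtain ⟨W, hWo, hWsub, hWA, hWe⟩ := swelling Ecl A hEc hAo hEA hEempty
    refine ⟨W, hWo, hWA, ?_, hWe⟩
    apply univ_subset_iff.1
    rw [← hEcov]
    exact iUnion_mono hWsub
  have hcov : CovDimLE X n := covDimLE_of_H n Hn
  have hnat : ((k : ℤ) + m).toNat = n := by omega
  rw [Dim.ofInt, if_pos (by omega), hnat]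
  exact covDim_le_of_covDimLE n hcov


end
end

section
/- For every open ∂Δ^k-tuple 𝒰 = (U_0,…,U_k) of a topological space X, the set of ∂Δ^k-obstruction points for 𝒰 equals ⋂_{0≤i≤k} cl( ⋂_{0≤j≤k, j≠i} U_j ). -/
open Set Topology Cardinal

noncomputable section

attribute [local instance] Classical.propDecidable

-- STATEMENT 5
theorem statement5 (k : ℕ) (X : Type) [TopologicalSpace X]
    (U : Fin (k + 1) → Set X) (hU : ∀ i, IsOpen (U i)) (ht : IsKTuple (bComplex k) U) :
    KObs (bComplex k) U = ⋂ i, closure (⋂ j, ⋂ (_ : j ≠ i), U j) := by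
  have hIU : (⋂ i, U i) = ∅ := by
    by_contra h
    rw [← Ne, ← nonempty_iff_ne_empty] at h
    exact ht Finset.univ Finset.univ_nonempty (by simpa using h) rfl
  ext x
  simp only [KObs, mem_setOf_eq, mem_iInter]
  constructor
  · intro hx i
    by_contra hcl
    apply hx
    refine ⟨fun j => if j = i then U j ∪ (closure (⋂ j, ⋂ (_ : j ≠ i), U j))ᶜ else U j,
      ⟨?_, ?_, ?_⟩, ?_⟩
    · intro j
      by_cases h : j = i
      · simpa [h] using (hU i).union isClosed_closure.isOpen_compl
      · simpa [h] using hU j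
    · intro I _ hne hIuniv
      obtain ⟨y, hy⟩ := hne
      simp only [mem_iInter] at hy
      have hyj : ∀ j, j ≠ i → y ∈ U j := by
        intro j hj
        have := hy j (by simp [hIuniv])
        simpa [hj] using this
      have hyi := hy i (by simp [hIuniv])
      simp only [if_pos rfl] at hyi
      rcases hyi with hyi | hyi
      · have : y ∈ ⋂ j, U j := mem_iInter.2 fun j => by
          by_cases h : j = i
          · exact h ▸ hyi
          · exact hyj j h
        simp [hIU] at this
      · exact hyi (subset_closure (mem_iInter.2 fun j => mem_iInter.2 fun hj => hyj j hj))
    · intro j y hy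
      by_cases h : j = i
      · simp only [h, if_pos]
        exact Or.inl (h ▸ hy)
      · simpa [h] using hy
    · exact mem_iUnion.2 ⟨i, by simp [hcl]⟩
  · rintro hx ⟨V, ⟨hVo, hVt, hUV⟩, hxV⟩
    obtain ⟨i, hxi⟩ := mem_iUnion.1 hxV
    have hVemp : (⋂ j, V j) = ∅ := by
      by_contra h
      rw [← Ne, ← nonempty_iff_ne_empty] at h
      exact hVt Finset.univ Finset.univ_nonempty (by simpa using h) rfl
    obtain ⟨y, hyV, hyU⟩ := mem_closure_iff.1 (hx i) (V i) (hVo i) hxi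
    simp only [mem_iInter] at hyU
    have : y ∈ ⋂ j, V j := mem_iInter.2 fun j => by
      by_cases h : j = i
      · exact h ▸ hyV
      · exact hUV j (hyU j h)
    simp [hVemp] at this

end
end
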